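/- arXiv:2412.10620 — 5 statements merged into one kernel-verified Lean document; each statement's English description precedes it below -/
import Mathlib

section
/- Let A be a k×k real symmetric matrix with nonnegative entries, zero diagonal, and equal row sums (Einstein of constant c > 0). Then the following are equivalent: (a) for every v ∈ ℝ^k with nonnegative entries summing to k and vᵀA v > 0, one has (vᵀA𝟙_k)/(vᵀA v) ≥ 1; (b) the quadratic form w ↦ wᵀA w is negative semidefinite on the hyperplane {w ∈ ℝ^k : Σᵢ wᵢ = 0}. -/
open Matrix
open scoped BigOperators

theorem stmt_4 {k : ℕ} (A : Matrix (Fin k) (Fin k) ℝ) (c : ℝ) (hc : 0 < c)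
    (hsym : A.IsSymm) (hdiag : ∀ i, A i i = 0)
    (hnonneg : ∀ i j, 0 ≤ A i j)
    (hrow : ∀ i, ∑ j, A i j = c) :
    (∀ v : Fin k → ℝ, (∀ i, 0 ≤ v i) → (∑ i, v i) = (k : ℝ) →
        0 < v ⬝ᵥ (A *ᵥ v) → 1 ≤ (v ⬝ᵥ (A *ᵥ 1)) / (v ⬝ᵥ (A *ᵥ v))) ↔
    (∀ w : Fin k → ℝ, (∑ i, w i) = 0 → w ⬝ᵥ (A *ᵥ w) ≤ 0) := by
  have hA1 : A *ᵥ (1 : Fin k → ℝ) = c • (1 : Fin k → ℝ) := by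
    ext i
    simp [Matrix.mulVec, dotProduct, hrow i]
  have h1Aw : ∀ w : Fin k → ℝ, (1 : Fin k → ℝ) ⬝ᵥ (A *ᵥ w) = c * ∑ i, w i := by
    intro w
    have h0 : (1 : Fin k → ℝ) ⬝ᵥ (A *ᵥ w) = ∑ i, ∑ j, A i j * w j := by
      simp [dotProduct, Matrix.mulVec]
    rw [h0, Finset.sum_comm]
    simp_rw [← Finset.sum_mul]
    have hcol : ∀ j, (∑ i, A i j) = c := by
      intro j
      have heq : ∀ i, A i j = A j i := fun i => by
        have := hsym.apply i j
        simpa [Matrix.transpose_apply] using this.symm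
      rw [Finset.sum_congr rfl fun i _ => heq i]
      exact hrow j
    simp_rw [hcol]
    rw [← Finset.mul_sum]
  have hvA1 : ∀ v : Fin k → ℝ, v ⬝ᵥ (A *ᵥ 1) = c * ∑ i, v i := by
    intro v
    rw [hA1]
    simp [dotProduct, Finset.mul_sum, mul_comm]
  have hexp : ∀ w : Fin k → ℝ, (∑ i, w i) = 0 →
      ((1 : Fin k → ℝ) + w) ⬝ᵥ (A *ᵥ ((1 : Fin k → ℝ) + w)) = c * k + w ⬝ᵥ (A *ᵥ w) := by
    intro w hw
    rw [Matrix.mulVec_add, dotProduct_add, add_dotProduct,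
      add_dotProduct, h1Aw w, hw, hvA1 (1 : Fin k → ℝ)]
    have hw1 : w ⬝ᵥ (A *ᵥ 1) = 0 := by rw [hvA1 w, hw, mul_zero]
    have h11 : (∑ i, (1 : Fin k → ℝ) i) = (k : ℝ) := by simp
    rw [hw1, h11]
    ring
  constructor
  · -- (a) → (b)
    intro ha w hw
    by_contra h
    push_neg at h
    -- k > 0 since the quadratic form is positive
    have hk : 0 < k := by
      by_contra hk0
      push_neg at hk0
      interval_cases k
      simp [dotProduct] at h
    set S : ℝ := ∑ i, |w i| with hS
    have hS0 : 0 ≤ S := Finset.sum_nonneg fun i _ => abs_nonneg _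
    set t : ℝ := (1 + S)⁻¹ with ht
    have ht0 : 0 < t := by positivity
    have htboundS : t * S < 1 := by
      rw [ht, inv_mul_lt_iff₀ (by positivity)]
      linarith
    set v : Fin k → ℝ := (1 : Fin k → ℝ) + t • w with hv
    have hvnn : ∀ i, 0 ≤ v i := by
      intro i
      have h1 : |w i| ≤ S := by
        rw [hS]
        exact Finset.single_le_sum (fun j _ => abs_nonneg (w j)) (Finset.mem_univ i)
      have h2 : t * |w i| ≤ t * S := by
        exact mul_le_mul_of_nonneg_left h1 ht0.le
      have h3 : -(t * w i) ≤ t * |w i| := by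
        rw [← mul_neg]
        exact mul_le_mul_of_nonneg_left (neg_le_abs _) ht0.le
      have hvi : v i = 1 + t * w i := by simp [hv]
      rw [hvi]
      linarith
    have hvsum : (∑ i, v i) = (k : ℝ) := by
      simp [hv, Finset.sum_add_distrib, ← Finset.mul_sum, hw]
    have htw : (∑ i, (t • w) i) = 0 := by
      simp [← Finset.mul_sum, hw]
    have hq : v ⬝ᵥ (A *ᵥ v) = c * k + t ^ 2 * (w ⬝ᵥ (A *ᵥ w)) := by
      rw [hv, hexp (t • w) htw]
      congr 1
      rw [Matrix.mulVec_smul, dotProduct_smul, smul_dotProduct]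
      simp [smul_eq_mul]
      ring
    have hck : 0 < c * k := by positivity
    have hpos : 0 < v ⬝ᵥ (A *ᵥ v) := by
      rw [hq]; positivity
    have := ha v hvnn hvsum hpos
    rw [hvA1 v, hvsum] at this
    rw [le_div_iff₀ hpos, one_mul, hq] at this
    nlinarith [mul_pos (pow_pos ht0 2) h]
  · -- (b) → (a)
    intro hb v hvnn hvsum hpos
    set w : Fin k → ℝ := v - 1 with hw
    have hwsum : (∑ i, w i) = 0 := by
      simp [hw, Finset.sum_sub_distrib, hvsum]
    have hvw : v = (1 : Fin k → ℝ) + w := by simp [hw]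
    have hq : v ⬝ᵥ (A *ᵥ v) = c * k + w ⬝ᵥ (A *ᵥ w) := by
      rw [hvw]; exact hexp w hwsum
    have hle : v ⬝ᵥ (A *ᵥ v) ≤ c * k := by
      rw [hq]
      have := hb w hwsum
      linarith
    rw [hvA1 v, hvsum, le_div_iff₀ hpos, one_mul]
    linarith
end

section
/- Let K be an ℓ×ℓ real symmetric matrix with nonnegative entries, zero diagonal, and row sums Σ_j K_ij ≤ c for all i. Fix 2 < k < ℓ. If every principal k×k submatrix of K is Einstein (has all its row sums equal), then all off-diagonal entries of K are equal; i.e., K = κ'(J−I) for some κ' ≥ 0, where J is the all-ones matrix and I the identity. -/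
/-
Fix distinct indices `i, j`. Comparing rows `i` and `j` of the Einstein submatrix on
`{i, j} ∪ T` for a `(k-2)`-set `T` avoiding them, the terms `K i j = K j i` cancel and so do the
zero diagonal entries, leaving `∑_{t ∈ T} (K i t - K j t) = 0`. Since `0 < k - 2 < ℓ - 2`, a
function all of whose `(k-2)`-subsums over the complement of `{i, j}` vanish is zero there
(exchange one element to see it is constant). So rows `i` and `j` agree off `{i, j}`, and with
symmetry this forces all off-diagonal entries to be equal.
-/

open Matrix
open scoped BigOperators
open Finset

theorem Finset.eq_zero_of_forall_sum_card_eq {ι M : Type*} [DecidableEq ι] [AddCommGroup M]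
    [IsAddTorsionFree M] {C : Finset ι} {m : ℕ} (f : ι → M) (hm : 0 < m) (hmC : m < #C)
    (h : ∀ T ⊆ C, #T = m → ∑ t ∈ T, f t = 0) {x : ι} (hx : x ∈ C) : f x = 0 := by
  have hconst : ∀ y ∈ C, f y = f x := by
    intro y hy
    by_cases hyx : y = x
    · rw [hyx]
    have hcard : m - 1 ≤ #((C.erase x).erase y) := by
      rw [card_erase_of_mem (mem_erase.mpr ⟨hyx, hy⟩), card_erase_of_mem hx]
      omega
    obtain ⟨T, hTC, hTcard⟩ := exists_subset_card_eq hcard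
    have hxT : x ∉ T := fun h ↦ by simpa using hTC h
    have hyT : y ∉ T := fun h ↦ by simpa using hTC h
    have hTC' : T ⊆ C := hTC.trans ((erase_subset _ _).trans (erase_subset _ _))
    have hy0 := h (insert y T) (insert_subset hy hTC') (by rw [card_insert_of_notMem hyT]; omega)
    have hx0 := h (insert x T) (insert_subset hx hTC') (by rw [card_insert_of_notMem hxT]; omega)
    rw [sum_insert hyT] at hy0
    rw [sum_insert hxT] at hx0
    exact add_right_cancel (hy0.trans hx0.symm)
  obtain ⟨T, hTC, hTcard⟩ := exists_subset_card_eq hmC.le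
  have hmx : m • f x = 0 := by
    rw [← hTcard, ← sum_const, ← h T hTC hTcard]
    exact sum_congr rfl fun y hy ↦ (hconst y (hTC hy)).symm
  exact (nsmul_eq_zero_iff_right hm.ne').mp hmx

namespace Matrix

variable {α R : Type*}

def IsEinsteinOn [AddCommMonoid R] (K : Matrix α α R) (S : Finset α) : Prop :=
  ∀ a ∈ S, ∀ b ∈ S, ∑ t ∈ S, K a t = ∑ t ∈ S, K b t

theorem isEinsteinOn_of_forall_injective [AddCommMonoid R] (K : Matrix α α R) {k : ℕ}
    (hEin : ∀ f : Fin k → α, Function.Injective f →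
      ∀ a b : Fin k, ∑ t, K (f a) (f t) = ∑ t, K (f b) (f t))
    {S : Finset α} (hS : #S = k) : K.IsEinsteinOn S := by
  intro a ha b hb
  let e : Fin k ≃ S := (S.equivFinOfCardEq hS).symm
  have hsum : ∀ x, ∑ t, K x (e t) = ∑ t ∈ S, K x t := fun x ↦
    (e.sum_comp fun s : S ↦ K x s).trans (S.sum_coe_sort (K x))
  have h := hEin (fun t ↦ e t) (Subtype.val_injective.comp e.injective)
    (e.symm ⟨a, ha⟩) (e.symm ⟨b, hb⟩)
  simpa only [Equiv.apply_symm_apply, hsum] using h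

theorem IsEinsteinOn.sum_sub_eq_zero [DecidableEq α] [AddCommGroup R] {K : Matrix α α R}
    (hsym : K.IsSymm) (hdiag : ∀ i, K i i = 0) {i j : α} {T : Finset α} (hij : i ≠ j)
    (hiT : i ∉ T) (hjT : j ∉ T) (hE : K.IsEinsteinOn (insert i (insert j T))) :
    ∑ t ∈ T, (K i t - K j t) = 0 := by
  have hiT' : i ∉ insert j T := by simp [hij, hiT]
  have h := hE i (mem_insert_self _ _) j (mem_insert_of_mem (mem_insert_self _ _))
  rw [sum_insert hiT', sum_insert hiT', sum_insert hjT, sum_insert hjT, hdiag, hdiag,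
    hsym.apply i j] at h
  rw [sum_sub_distrib, sub_eq_zero]
  simpa using h

theorem apply_eq_apply_of_forall_isEinsteinOn [Fintype α] [DecidableEq α] [AddCommGroup R]
    [IsAddTorsionFree R] {K : Matrix α α R} (hsym : K.IsSymm) (hdiag : ∀ i, K i i = 0)
    {k : ℕ} (hk : 2 < k) (hkα : k < Fintype.card α)
    (hE : ∀ S : Finset α, #S = k → K.IsEinsteinOn S)
    {i j t : α} (hij : i ≠ j) (hti : t ≠ i) (htj : t ≠ j) : K i t = K j t := by
  have hcard : #(univ \ {i, j}) = Fintype.card α - 2 := by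
    rw [card_sdiff_of_subset (subset_univ _), card_univ, card_pair hij]
  refine sub_eq_zero.mp <| eq_zero_of_forall_sum_card_eq (fun t ↦ K i t - K j t)
    (C := univ \ {i, j}) (m := k - 2) (by omega) (by omega) ?_ (by simp [hti, htj])
  intro T hT hTcard
  have hiT : i ∉ T := fun h ↦ by simpa using hT h
  have hjT : j ∉ T := fun h ↦ by simpa using hT h
  have hiT' : i ∉ insert j T := by simp [hij, hiT]
  refine (hE _ ?_).sum_sub_eq_zero hsym hdiag hij hiT hjT
  rw [card_insert_of_notMem hiT', card_insert_of_notMem hjT, hTcard]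
  omega

theorem IsSymm.apply_eq_apply_of_ne {K : Matrix α α R} (hsym : K.IsSymm)
    (hrows : ∀ i j t, i ≠ j → t ≠ i → t ≠ j → K i t = K j t)
    {i j p q : α} (hij : i ≠ j) (hpq : p ≠ q) : K i j = K p q := by
  have hrow : ∀ i j q, j ≠ i → q ≠ i → K i j = K i q := by
    intro i j q hji hqi
    by_cases hjq : j = q
    · rw [hjq]
    rw [← hsym.apply, ← hsym.apply i q]
    exact hrows j q i hjq hji.symm hqi.symm
  by_cases hip : i = p
  · subst hip
    exact hrow i j q hij.symm hpq.symm
  calc K i j = K i p := hrow i j p hij.symm (Ne.symm hip)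
    _ = K p i := hsym.apply p i
    _ = K p q := hrow p i q hip hpq.symm

end Matrix

theorem stmt_8_general {ℓ k : ℕ} (hk : 2 < k) (hkl : k < ℓ)
    (K : Matrix (Fin ℓ) (Fin ℓ) ℝ)
    (hsym : K.IsSymm) (hdiag : ∀ i, K i i = 0)
    (hnonneg : ∀ i j, 0 ≤ K i j)
    (hEin : ∀ f : Fin k → Fin ℓ, Function.Injective f →
      ∀ a b : Fin k, ∑ t, K (f a) (f t) = ∑ t, K (f b) (f t)) :
    ∃ κ' : ℝ, 0 ≤ κ' ∧ ∀ i j, i ≠ j → K i j = κ' := by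
  have hrows : ∀ i j t, i ≠ j → t ≠ i → t ≠ j → K i t = K j t := fun _ _ _ ↦
    apply_eq_apply_of_forall_isEinsteinOn hsym hdiag hk (by simpa using hkl)
      fun _ hS ↦ isEinsteinOn_of_forall_injective K hEin hS
  refine ⟨K ⟨0, by omega⟩ ⟨1, by omega⟩, hnonneg _ _, fun i j hij ↦ ?_⟩
  exact hsym.apply_eq_apply_of_ne hrows hij (by simp [Fin.ext_iff])

theorem stmt_8 {ℓ k : ℕ} (hk : 2 < k) (hkl : k < ℓ)
    (K : Matrix (Fin ℓ) (Fin ℓ) ℝ) (c : ℝ)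
    (hsym : K.IsSymm) (hdiag : ∀ i, K i i = 0)
    (hnonneg : ∀ i j, 0 ≤ K i j)
    (hrow : ∀ i, ∑ j, K i j ≤ c)
    (hEin : ∀ f : Fin k → Fin ℓ, Function.Injective f →
      ∀ a b : Fin k, ∑ t, K (f a) (f t) = ∑ t, K (f b) (f t)) :
    ∃ κ' : ℝ, 0 ≤ κ' ∧ ∀ i j, i ≠ j → K i j = κ' :=
  stmt_8_general hk hkl K hsym hdiag hnonneg hEin
end

section
/- Fix distinct indices i, j, p, q in {1,…,ℓ} and an integer k with 2 < k < ℓ, k+1 ≤ ℓ. Let K be an ℓ×ℓ symmetric matrix such that every principal k×k submatrix of K is Einstein. Then K_{qi} − K_{pi} = K_{qj} − K_{pj}. -/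
open Matrix
open scoped BigOperators

open Finset

/-! Choose `B` of size `k - 1` containing `i, j` and avoiding `p, q`. The Einstein condition on the
principal submatrix indexed by `B ∪ {r}`, for `r ∉ B`, reads
`K i r - K j r = ∑ t ∈ B, (K j t - K i t)`, which does not depend on `r`; take `r = p, q` and use
symmetry. -/

lemma Matrix.sum_row_eq_of_card_eq {ι R : Type*} [AddCommMonoid R] {k : ℕ} (K : Matrix ι ι R)
    (hEin : ∀ f : Fin k → ι, Function.Injective f →
      ∀ a b : Fin k, ∑ t, K (f a) (f t) = ∑ t, K (f b) (f t))
    {S : Finset ι} (hS : #S = k) {x y : ι} (hx : x ∈ S) (hy : y ∈ S) :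
    ∑ t ∈ S, K x t = ∑ t ∈ S, K y t := by
  set e : Fin k ≃ S := (S.equivFinOfCardEq hS).symm
  have hsum : ∀ z, ∑ t, K z (e t) = ∑ t ∈ S, K z t := fun z => by
    rw [e.sum_comp (fun t : S => K z t), sum_coe_sort S (K z)]
  have h := hEin (Subtype.val ∘ e) (Subtype.val_injective.comp e.injective)
    (e.symm ⟨x, hx⟩) (e.symm ⟨y, hy⟩)
  simpa only [Function.comp_apply, Equiv.apply_symm_apply, hsum] using h

lemma Matrix.sub_eq_sub_of_sum_insert_eq {ι R : Type*} [DecidableEq ι] [AddCommGroup R]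
    (K : Matrix ι ι R) {B : Finset ι} {p q x y : ι} (hpB : p ∉ B) (hqB : q ∉ B)
    (hp : ∑ t ∈ insert p B, K x t = ∑ t ∈ insert p B, K y t)
    (hq : ∑ t ∈ insert q B, K x t = ∑ t ∈ insert q B, K y t) :
    K x p - K y p = K x q - K y q := by
  rw [sum_insert hpB, sum_insert hpB] at hp
  rw [sum_insert hqB, sum_insert hqB] at hq
  rw [sub_eq_sub_iff_add_eq_add, ← add_right_cancel_iff (a := ∑ t ∈ B, K x t + ∑ t ∈ B, K y t)]
  convert congrArg₂ (· + ·) hp hq.symm using 1 <;> abel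

theorem stmt_9_general {ℓ k : ℕ} (hk : 2 < k) (hkl : k + 1 ≤ ℓ)
    (K : Matrix (Fin ℓ) (Fin ℓ) ℝ)
    (hsym : K.IsSymm)
    (hEin : ∀ f : Fin k → Fin ℓ, Function.Injective f →
      ∀ a b : Fin k, ∑ t, K (f a) (f t) = ∑ t, K (f b) (f t))
    (i j p q : Fin ℓ)
    (hip : i ≠ p) (hiq : i ≠ q)
    (hjp : j ≠ p) (hjq : j ≠ q) :
    K q i - K p i = K q j - K p j := by
  have hij_pq : {i, j} ⊆ univ \ {p, q} := by
    intro x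
    simp only [mem_insert, mem_singleton, mem_sdiff, mem_univ, true_and]
    rintro (rfl | rfl) <;> tauto
  have hroom : k - 1 ≤ #(univ \ {p, q}) := by
    grw [← le_card_sdiff, card_univ, Fintype.card_fin, card_le_two]
    omega
  obtain ⟨B, hijB, hBpq, hB⟩ :=
    exists_subsuperset_card_eq hij_pq (card_le_two.trans (by omega)) hroom
  have hnotB : ∀ r ∈ ({p, q} : Finset (Fin ℓ)), r ∉ B := fun r hr hrB =>
    (mem_sdiff.1 (hBpq hrB)).2 hr
  have hrow : ∀ r ∉ B, ∑ t ∈ insert r B, K i t = ∑ t ∈ insert r B, K j t := fun r hr =>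
    K.sum_row_eq_of_card_eq hEin (by rw [card_insert_of_notMem hr, hB]; omega)
      (mem_insert_of_mem (hijB (by simp))) (mem_insert_of_mem (hijB (by simp)))
  have hpB := hnotB p (by simp)
  have hqB := hnotB q (by simp)
  have h := K.sub_eq_sub_of_sum_insert_eq hpB hqB (hrow p hpB) (hrow q hqB)
  have hK : ∀ a b, K a b = K b a := fun a b => hsym.apply b a
  rw [hK q i, hK p i, hK q j, hK p j]
  linarith

theorem stmt_9 {ℓ k : ℕ} (hk : 2 < k) (hkl : k + 1 ≤ ℓ)
    (K : Matrix (Fin ℓ) (Fin ℓ) ℝ)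
    (hsym : K.IsSymm) (hdiag : ∀ i, K i i = 0)
    (hEin : ∀ f : Fin k → Fin ℓ, Function.Injective f →
      ∀ a b : Fin k, ∑ t, K (f a) (f t) = ∑ t, K (f b) (f t))
    (i j p q : Fin ℓ)
    (hij : i ≠ j) (hip : i ≠ p) (hiq : i ≠ q)
    (hjp : j ≠ p) (hjq : j ≠ q) (hpq : p ≠ q) :
    K q i - K p i = K q j - K p j :=
  stmt_9_general hk hkl K hsym hEin i j p q hip hiq hjp hjq
end

section
/- Let r > 0 and let A = A_{{(1,2)}}(r) ∈ M_{3×3}(ℝ) be the symmetric matrix with zero diagonal, A₁₂ = A₂₁ = r, and all other off-diagonal entries equal to 1. For r = 4, the minimum over the simplex 𝒮² = {v ∈ ℝ³ : vᵢ ≥ 0, Σvᵢ = 3} of φ_A(v) = (vᵀA𝟙₃)/(vᵀAv) (taken over v with vᵀAv > 0) equals 5/6. -/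
/-!
Write `v = (a, b, c)` and `s = a + b = 3 - c`. The numerator `vᵀA𝟙` is `(r + 1) s + 2c`, and by
AM-GM the quadratic form `vᵀAv = 2r ab + 2cs` is at most `r s² / 2 + 2cs`. For `r ≥ 4` this gives
`3r · vᵀA𝟙 - 2(r + 1) · vᵀAv ≥ c ((r + 1)(r - 4) s + 6r) ≥ 0`, so `φ_A ≥ 2(r + 1) / (3r)`, with
equality at `v = (3/2, 3/2, 0)`.
-/

open Matrix

/-- The matrix `A_{(1,2)}(r)`. -/
def pairMatrix (r : ℝ) : Matrix (Fin 3) (Fin 3) ℝ := !![0, r, 1; r, 0, 1; 1, 1, 0]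

section PairMatrix

variable (r : ℝ) (v : Fin 3 → ℝ)

lemma dotProduct_pairMatrix_mulVec_one :
    v ⬝ᵥ (pairMatrix r *ᵥ 1) = (r + 1) * (v 0 + v 1) + 2 * v 2 := by
  simp [pairMatrix, dotProduct, mulVec, Fin.sum_univ_three]
  ring

lemma dotProduct_pairMatrix_mulVec_self :
    v ⬝ᵥ (pairMatrix r *ᵥ v) = 2 * r * v 0 * v 1 + 2 * v 2 * (v 0 + v 1) := by
  simp [pairMatrix, dotProduct, mulVec, Fin.sum_univ_three]
  ring

variable {r v}

lemma pairMatrix_quadForm_mul_le (hr : 4 ≤ r) (hv : ∀ i, 0 ≤ v i) (hsum : ∑ i, v i = 3) :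
    2 * (r + 1) * (v ⬝ᵥ (pairMatrix r *ᵥ v)) ≤ 3 * r * (v ⬝ᵥ (pairMatrix r *ᵥ 1)) := by
  rw [dotProduct_pairMatrix_mulVec_self, dotProduct_pairMatrix_mulVec_one]
  rw [Fin.sum_univ_three] at hsum
  have hc : v 2 = 3 - (v 0 + v 1) := by linarith
  have amgm : 4 * v 0 * v 1 ≤ (v 0 + v 1) ^ 2 := four_mul_le_sq_add _ _
  have hgap : 0 ≤ (r + 1) * (r - 4) * (v 0 + v 1) + 6 * r := by
    have := mul_nonneg (mul_nonneg (by linarith : 0 ≤ r + 1) (sub_nonneg.2 hr))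
      (add_nonneg (hv 0) (hv 1))
    linarith
  -- with `3 = (v 0 + v 1) + v 2`, the difference of the two sides is
  -- `r (r + 1) ((v 0 + v 1)² - 4 v 0 v 1) + v 2 · ((r + 1)(r - 4)(v 0 + v 1) + 6r)`
  have hamgm := mul_nonneg (mul_nonneg (by linarith) (by linarith) : 0 ≤ r * (r + 1)) (sub_nonneg.2 amgm)
  have hcgap := mul_nonneg (hv 2) hgap
  rw [hc] at hcgap ⊢
  linarith

theorem isLeast_pairMatrix_ratio (hr : 4 ≤ r) :
    IsLeast
      {x : ℝ | ∃ v : Fin 3 → ℝ, (∀ i, 0 ≤ v i) ∧ (∑ i, v i) = 3 ∧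
        0 < v ⬝ᵥ (pairMatrix r *ᵥ v) ∧
        x = (v ⬝ᵥ (pairMatrix r *ᵥ 1)) / (v ⬝ᵥ (pairMatrix r *ᵥ v))}
      (2 * (r + 1) / (3 * r)) := by
  have hr₀ : 0 < r := by linarith
  constructor
  · refine ⟨![3/2, 3/2, 0], ?_, ?_, ?_, ?_⟩
    · intro i; fin_cases i <;> norm_num
    · norm_num [Fin.sum_univ_three, cons_val_two, tail_cons, head_cons]
    · rw [dotProduct_pairMatrix_mulVec_self]
      norm_num [cons_val_two, tail_cons, head_cons]
      positivity
    · rw [dotProduct_pairMatrix_mulVec_self, dotProduct_pairMatrix_mulVec_one]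
      norm_num [cons_val_two, tail_cons, head_cons]
      field_simp
  · rintro x ⟨v, hv, hsum, hpos, rfl⟩
    rw [div_le_div_iff₀ (by positivity) hpos]
    linarith [pairMatrix_quadForm_mul_le hr hv hsum]

end PairMatrix

theorem stmt_13 :
    IsLeast
      {x : ℝ | ∃ v : Fin 3 → ℝ, (∀ i, 0 ≤ v i) ∧ (∑ i, v i) = 3 ∧
        0 < v ⬝ᵥ ((!![0, 4, 1; 4, 0, 1; 1, 1, 0] : Matrix (Fin 3) (Fin 3) ℝ) *ᵥ v) ∧
        x = (v ⬝ᵥ ((!![0, 4, 1; 4, 0, 1; 1, 1, 0] : Matrix (Fin 3) (Fin 3) ℝ) *ᵥ 1)) /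
            (v ⬝ᵥ ((!![0, 4, 1; 4, 0, 1; 1, 1, 0] : Matrix (Fin 3) (Fin 3) ℝ) *ᵥ v))}
      (5 / 6) := by
  convert isLeast_pairMatrix_ratio (le_refl (4 : ℝ)) using 1
  · rfl
  · norm_num
end

section
/- Let k ≥ 3 and r ≥ 1. For each subset J of the set of pairs 𝓘_k = {(i,j) : 1 ≤ i < j ≤ k}, let A_J(r) be the symmetric k×k matrix with zero diagonal whose (i,j) entry is r if (i,j) ∈ J (or (j,i) ∈ J) and 1 otherwise (for i ≠ j). Define φ(A) := inf{(vᵀA𝟙_k)/(vᵀAv) : v ∈ ℝ^k, vᵢ ≥ 0, Σvᵢ = k, vᵀAv > 0} and φ_k(r) := min_{J ⊆ 𝓘_k} φ(A_J(r)). Then for every k×k symmetric matrix A with zero diagonal and off-diagonal entries satisfying 1 ≤ A_ij ≤ r, and every vector u ∈ ℝ^k with nonnegative entries and Σuᵢ ≤ k·φ_k(r), one has uᵀA(𝟙_k − u) ≥ 0. -/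
open Matrix
open scoped BigOperators

/-- `φ(A)`: infimum of `(vᵀA𝟙)/(vᵀAv)` over the simplex where `vᵀAv > 0`. -/
noncomputable def phiA {k : ℕ} (A : Matrix (Fin k) (Fin k) ℝ) : ℝ :=
  sInf {x : ℝ | ∃ v : Fin k → ℝ, (∀ i, 0 ≤ v i) ∧ (∑ i, v i) = (k : ℝ) ∧
    0 < v ⬝ᵥ (A *ᵥ v) ∧ x = (v ⬝ᵥ (A *ᵥ 1)) / (v ⬝ᵥ (A *ᵥ v))}

/-- The matrix `A_J(r)`: zero diagonal, entry `r` on pairs in `J` (or their swaps), `1` otherwise. -/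
def AJ {k : ℕ} (r : ℝ) (J : Finset (Fin k × Fin k)) : Matrix (Fin k) (Fin k) ℝ :=
  Matrix.of fun i j => if i = j then 0 else if (i, j) ∈ J ∨ (j, i) ∈ J then r else 1

/-- `φ_k(r) := min over J of φ(A_J(r))`. -/
noncomputable def phik (k : ℕ) (r : ℝ) : ℝ :=
  sInf {x : ℝ | ∃ J : Finset (Fin k × Fin k), x = phiA (AJ r J)}

/-- Quadratic form identity for symmetric matrices. -/
lemma quad_eq {k : ℕ} (M : Matrix (Fin k) (Fin k) ℝ) (hM : M.IsSymm) (u : Fin k → ℝ) :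
    u ⬝ᵥ (M *ᵥ (1 - u)) =
      (1/2) * ∑ i, ∑ j, M i j * (u i + u j - 2 * u i * u j) := by
  have hsym : ∀ i j, M j i = M i j := fun i j => by
    conv_lhs => rw [← hM]
    rfl
  have h1 : u ⬝ᵥ (M *ᵥ (1 - u)) = ∑ i, ∑ j, u i * (M i j * (1 - u j)) := by
    simp only [dotProduct, mulVec, Pi.sub_apply, Pi.one_apply, Finset.mul_sum]
  have h2 : ∑ i, ∑ j, u i * (M i j * (1 - u j))
      = ∑ i, ∑ j, u j * (M i j * (1 - u i)) := by
    rw [Finset.sum_comm]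
    refine Finset.sum_congr rfl fun i _ => Finset.sum_congr rfl fun j _ => ?_
    rw [hsym i j]
  have h3 : ∑ i, ∑ j, M i j * (u i + u j - 2 * u i * u j)
      = (∑ i, ∑ j, u i * (M i j * (1 - u j))) + ∑ i, ∑ j, u j * (M i j * (1 - u i)) := by
    rw [← Finset.sum_add_distrib]
    refine Finset.sum_congr rfl fun i _ => ?_
    rw [← Finset.sum_add_distrib]
    refine Finset.sum_congr rfl fun j _ => ?_
    ring
  rw [h1, h3, ← h2]
  ring

theorem stmt_14 {k : ℕ} (hk : 3 ≤ k) (r : ℝ) (hr : 1 ≤ r)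
    (A : Matrix (Fin k) (Fin k) ℝ)
    (hsym : A.IsSymm) (hdiag : ∀ i, A i i = 0)
    (hbound : ∀ i j, i ≠ j → 1 ≤ A i j ∧ A i j ≤ r) :
    ∀ u : Fin k → ℝ, (∀ i, 0 ≤ u i) → (∑ i, u i) ≤ (k : ℝ) * phik k r →
      0 ≤ u ⬝ᵥ (A *ᵥ (1 - u)) := by
  intro u hu hsum
  -- the coefficient of the pair (i,j)
  set c : Fin k → Fin k → ℝ := fun i j => u i + u j - 2 * u i * u j with hc
  set J : Finset (Fin k × Fin k) :=
    Finset.univ.filter (fun p : Fin k × Fin k => c p.1 p.2 < 0) with hJ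
  set B : Matrix (Fin k) (Fin k) ℝ := AJ r J with hB
  have hmemJ : ∀ i j : Fin k, ((i, j) ∈ J ∨ (j, i) ∈ J) ↔ c i j < 0 := by
    intro i j
    have hcs : c j i = c i j := by simp only [hc]; ring
    simp [hJ, hcs]
  have hBsym : B.IsSymm := by
    ext i j
    simp only [hB, AJ, Matrix.transpose_apply, Matrix.of_apply]
    by_cases h : i = j
    · simp [h]
    · rw [if_neg (fun hh : j = i => h hh.symm), if_neg h]
      exact if_congr or_comm rfl rfl
  have hBdiag : ∀ i, B i i = 0 := fun i => by simp [hB, AJ]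
  have hBnonneg : ∀ i j, 0 ≤ B i j := by
    intro i j
    simp only [hB, AJ, Matrix.of_apply]
    split_ifs <;> linarith
  -- Step 1: uᵀA(1-u) ≥ uᵀB(1-u)
  have step1 : u ⬝ᵥ (B *ᵥ (1 - u)) ≤ u ⬝ᵥ (A *ᵥ (1 - u)) := by
    rw [quad_eq A hsym u, quad_eq B hBsym u]
    have : ∀ i j : Fin k, B i j * (c i j) ≤ A i j * (c i j) := by
      intro i j
      by_cases hij : i = j
      · subst hij; rw [hdiag i, hBdiag i]
      · have hb := hbound i j hij
        simp only [hB, AJ, Matrix.of_apply, if_neg hij]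
        by_cases hcn : c i j < 0
        · rw [if_pos ((hmemJ i j).mpr hcn)]
          exact mul_le_mul_of_nonpos_right hb.2 hcn.le
        · rw [if_neg (fun h => hcn ((hmemJ i j).mp h))]
          have : 0 ≤ c i j := not_lt.mp hcn
          nlinarith [hb.1]
    have hsums : ∑ i, ∑ j, B i j * (c i j) ≤ ∑ i, ∑ j, A i j * (c i j) :=
      Finset.sum_le_sum fun i _ => Finset.sum_le_sum fun j _ => this i j
    linarith
  -- Step 2: 0 ≤ uᵀB(1-u)
  have hPgen : ∀ w : Fin k → ℝ, (∀ i, 0 ≤ w i) → (0:ℝ) ≤ w ⬝ᵥ (B *ᵥ 1) := by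
    intro w hw
    simp only [dotProduct, mulVec, Pi.one_apply]
    apply Finset.sum_nonneg
    intro i _
    apply mul_nonneg (hw i)
    apply Finset.sum_nonneg
    intro j _
    exact mul_nonneg (hBnonneg i j) zero_le_one
  have hP : (0:ℝ) ≤ u ⬝ᵥ (B *ᵥ 1) := hPgen u hu
  have hsplit : u ⬝ᵥ (B *ᵥ (1 - u)) = u ⬝ᵥ (B *ᵥ 1) - u ⬝ᵥ (B *ᵥ u) := by
    rw [Matrix.mulVec_sub, dotProduct_sub]
  set P := u ⬝ᵥ (B *ᵥ 1) with hPdef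
  set Q := u ⬝ᵥ (B *ᵥ u) with hQdef
  by_cases hQ : Q ≤ 0
  · linarith
  push_neg at hQ
  -- Q > 0, so u ≠ 0 and s := Σ u > 0
  set s := ∑ i, u i with hs
  have hs0 : 0 < s := by
    rcases lt_or_eq_of_le (Finset.sum_nonneg fun i _ => hu i) with h | h
    · exact h
    · exfalso
      have hzero : ∀ i ∈ Finset.univ, u i = 0 :=
        (Finset.sum_eq_zero_iff_of_nonneg fun i _ => hu i).mp h.symm
      have : Q = 0 := by
        simp only [hQdef, dotProduct]
        apply Finset.sum_eq_zero
        intro i hi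
        rw [hzero i hi, zero_mul]
      linarith
  have hk0 : (0:ℝ) < k := by positivity
  set vc : ℝ := k / s with hvc
  have hvc0 : 0 < vc := div_pos hk0 hs0
  set v : Fin k → ℝ := vc • u with hv
  have hvQ : v ⬝ᵥ (B *ᵥ v) = vc * (vc * Q) := by
    rw [hv, Matrix.mulVec_smul, smul_dotProduct, dotProduct_smul]
    rfl
  have hvP : v ⬝ᵥ (B *ᵥ 1) = vc * P := by
    rw [hv, smul_dotProduct]; rfl
  have hvQpos : 0 < v ⬝ᵥ (B *ᵥ v) := by rw [hvQ]; positivity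
  -- membership in the phiA set
  set x : ℝ := (v ⬝ᵥ (B *ᵥ 1)) / (v ⬝ᵥ (B *ᵥ v)) with hx
  have hmem : x ∈ {y : ℝ | ∃ w : Fin k → ℝ, (∀ i, 0 ≤ w i) ∧ (∑ i, w i) = (k : ℝ) ∧
      0 < w ⬝ᵥ (B *ᵥ w) ∧ y = (w ⬝ᵥ (B *ᵥ 1)) / (w ⬝ᵥ (B *ᵥ w))} := by
    refine ⟨v, fun i => mul_nonneg hvc0.le (hu i), ?_, hvQpos, rfl⟩
    rw [hv]
    simp only [Pi.smul_apply, smul_eq_mul, ← Finset.mul_sum, ← hs, hvc]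
    field_simp
  -- phiA B ≤ x
  have hphiA_le : phiA B ≤ x := by
    apply csInf_le _ hmem
    refine ⟨0, ?_⟩
    rintro y ⟨w, hw, -, hwQ, rfl⟩
    exact div_nonneg (hPgen w hw) hwQ.le
  -- phik ≤ phiA B
  have hphik_le : phik k r ≤ phiA B := by
    apply csInf_le
    · have hfin : {y : ℝ | ∃ J' : Finset (Fin k × Fin k), y = phiA (AJ r J')}.Finite := by
        have : {y : ℝ | ∃ J' : Finset (Fin k × Fin k), y = phiA (AJ r J')} =
            Set.range (fun J' : Finset (Fin k × Fin k) => phiA (AJ r J')) := by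
          ext y; simp [eq_comm]
        rw [this]
        exact Set.finite_range _
      exact hfin.bddBelow
    · exact ⟨J, rfl⟩
  -- conclude
  have hchain : s ≤ (k:ℝ) * x := by
    calc s ≤ (k:ℝ) * phik k r := hsum
    _ ≤ (k:ℝ) * x := by
      apply mul_le_mul_of_nonneg_left (le_trans hphik_le hphiA_le) hk0.le
  have hxval : (k:ℝ) * x = s * (P / Q) := by
    rw [hx, hvP, hvQ, hvc]
    field_simp
  rw [hxval] at hchain
  have h1le : 1 ≤ P / Q := by
    by_contra h
    push_neg at h
    nlinarith
  have : Q ≤ P := by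
    rw [le_div_iff₀ hQ, one_mul] at h1le
    linarith
  linarith
end
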